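/- Key Property of BEST Objectives (XOS case): Let (A, f, c) be a multi-agent contract instance with XOS f and A nonempty, let B ∈ (0,1] be a budget, and let φ be a BEST objective. Then Max-φ(B) ≤ 2·Max-Reward-Light(B) + max_{i∈A} φ({i}). -/

import Mathlib

open scoped BigOperators ENNReal
open Finset

/-- Marginal contribution of agent `i` to set `S`: `f_S(i) = f(S) - f(S \ {i})`. -/
noncomputable def marginal {α : Type*} [DecidableEq α] (f : Finset α → ℝ) (S : Finset α)
    (i : α) : ℝ :=
  f S - f (S.erase i)

/-- Payment needed to incentivize `S`, valued in `[0,∞]`, with the conventions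
`0/0 = 0` and `x/0 = ∞` for `x > 0` (these hold for ENNReal division). -/
noncomputable def payment {α : Type*} [DecidableEq α] (f : Finset α → ℝ) (c : α → ℝ)
    (S : Finset α) : ℝ≥0∞ :=
  ∑ i ∈ S, ENNReal.ofReal (c i) / ENNReal.ofReal (marginal f S i)

/-- The principal's profit from incentivizing `S`: `g(S) = (1 - p(S)) · f(S)`. -/
noncomputable def profit {α : Type*} [DecidableEq α] (f : Finset α → ℝ) (c : α → ℝ)
    (S : Finset α) : ℝ :=
  (1 - (payment f c S).toReal) * f S

/-- `f` is monotone. -/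
def IsMonotoneFn {α : Type*} (f : Finset α → ℝ) : Prop :=
  ∀ ⦃S T : Finset α⦄, S ⊆ T → f S ≤ f T

/-- `f` is subadditive. -/
def IsSubadditive {α : Type*} [DecidableEq α] (f : Finset α → ℝ) : Prop :=
  ∀ S T : Finset α, f (S ∪ T) ≤ f S + f T

/-- `f` is submodular (decreasing marginal values). -/
def IsSubmodular {α : Type*} [DecidableEq α] (f : Finset α → ℝ) : Prop :=
  ∀ ⦃S T : Finset α⦄, S ⊆ T → ∀ i ∉ T, f (insert i T) - f T ≤ f (insert i S) - f S

/-- `f` is additive. -/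
def IsAdditive {α : Type*} [DecidableEq α] (f : Finset α → ℝ) : Prop :=
  ∀ S : Finset α, f S = ∑ i ∈ S, f {i}

/-- `f` is XOS: a finite max of nonnegative additive functions. -/
def IsXOS {α : Type*} (f : Finset α → ℝ) : Prop :=
  ∃ (k : ℕ) (a : Fin (k + 1) → α → ℝ),
    (∀ j i, 0 ≤ a j i) ∧
    ∀ S : Finset α, f S = Finset.univ.sup' Finset.univ_nonempty (fun j => ∑ i ∈ S, a j i)

/-- Agent `i` is light: it can be incentivized with payment at most `1/2`. -/
def isLight {α : Type*} [DecidableEq α] (f : Finset α → ℝ) (c : α → ℝ) (i : α) : Prop :=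
  payment f c {i} ≤ ENNReal.ofReal (1 / 2)

/-- `S` is budget-feasible for budget `B`. -/
def feasible {α : Type*} [DecidableEq α] (f : Finset α → ℝ) (c : α → ℝ) (B : ℝ)
    (S : Finset α) : Prop :=
  payment f c S ≤ ENNReal.ofReal B

/-- `S` is a budget-feasible set of light agents. -/
def feasibleLight {α : Type*} [DecidableEq α] (f : Finset α → ℝ) (c : α → ℝ) (B : ℝ)
    (S : Finset α) : Prop :=
  (∀ i ∈ S, isLight f c i) ∧ payment f c S ≤ ENNReal.ofReal B

/-- The maximum (supremum) value of objective `φ` over sets satisfying `P`. -/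
noncomputable def maxVal {α : Type*} (φ : Finset α → ℝ) (P : Finset α → Prop) : ℝ :=
  sSup (φ '' {S | P S})

/-- `φ` is a BEST objective for the instance `(f, c)`: it is nonnegative, sandwiched between
profit and reward, and satisfies `φ(S) ≤ f(S \ {i}) + φ({i})` for `i ∈ S`. -/
def IsBEST {α : Type*} [DecidableEq α] (f : Finset α → ℝ) (c : α → ℝ)
    (φ : Finset α → ℝ) : Prop :=
  (∀ S, 0 ≤ φ S) ∧
  (∀ S, φ S ≤ f S) ∧
  (∀ S, payment f c S ≤ 1 → (1 - (payment f c S).toReal) * f S ≤ φ S) ∧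
  (∀ S, ∀ i ∈ S, φ S ≤ f (S.erase i) + φ {i})

/-- `φ` is a BEST objective for the instance `(f, c)` restricted to sets satisfying `P`. -/
def IsBESTOn {α : Type*} [DecidableEq α] (f : Finset α → ℝ) (c : α → ℝ)
    (P : Finset α → Prop) (φ : Finset α → ℝ) : Prop :=
  (∀ S, P S → 0 ≤ φ S) ∧
  (∀ S, P S → φ S ≤ f S) ∧
  (∀ S, P S → payment f c S ≤ 1 → (1 - (payment f c S).toReal) * f S ≤ φ S) ∧
  (∀ S, P S → ∀ i ∈ S, φ S ≤ f (S.erase i) + φ {i})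


/-!
Fix a feasible `S`. If all its agents are light, `φ S ≤ f S` is itself a light value. Otherwise,
since XOS gives `f_S(i) ≤ f {i}`, every heavy agent of `S` receives more than half of `p(S) ≤ 1`,
so `S` has exactly one heavy agent `h`, and the others are paid at most `B / 2` in total. Take an
additive function `a ≤ f` that is tight at `S` and greedily drop from `S \ {h}` agents whose
marginal falls below `a i / 2`. The survivors `T` keep half of the value, `f (S \ {h}) ≤ 2 f(T)`,
and each of them is paid at most twice what it got in `S`, so `T` is a feasible set of light
agents and `φ S ≤ f (S \ {h}) + φ {h} ≤ 2 f(T) + φ {h}`.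
-/

section

variable {α : Type*} {f : Finset α → ℝ} {c : α → ℝ} {S T : Finset α} {a : α → ℝ} {B : ℝ}

def IsSupportingAdditive (f : Finset α → ℝ) (S : Finset α) (a : α → ℝ) : Prop :=
  (∀ i, 0 ≤ a i) ∧ ∑ i ∈ S, a i = f S ∧ ∀ V, ∑ i ∈ V, a i ≤ f V

theorem IsXOS.exists_isSupportingAdditive (hf : IsXOS f) (S : Finset α) :
    ∃ a, IsSupportingAdditive f S a := by
  obtain ⟨k, a, ha, hfa⟩ := hf
  obtain ⟨j, -, hj⟩ := exists_mem_eq_sup' univ_nonempty fun j => ∑ i ∈ S, a j i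
  refine ⟨a j, ha j, by rw [hfa, hj], fun V => ?_⟩
  rw [hfa]
  exact le_sup' (fun j => ∑ i ∈ V, a j i) (mem_univ j)

theorem IsXOS.map_empty (hf : IsXOS f) : f ∅ = 0 := by
  obtain ⟨a, -, ha, -⟩ := hf.exists_isSupportingAdditive ∅
  simpa using ha.symm

theorem IsSupportingAdditive.apply_le_singleton (ha : IsSupportingAdditive f S a) (j : α) :
    a j ≤ f {j} := by
  simpa using ha.2.2 {j}

variable [DecidableEq α]

theorem IsSupportingAdditive.marginal_le (ha : IsSupportingAdditive f S a) {j : α} (hj : j ∈ S) :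
    marginal f S j ≤ a j := by
  have := sum_erase_add S a hj
  linarith [ha.2.1, ha.2.2 (S.erase j), show marginal f S j = f S - f (S.erase j) from rfl]

theorem IsXOS.marginal_le_singleton (hf : IsXOS f) {j : α} (hj : j ∈ S) :
    marginal f S j ≤ f {j} := by
  obtain ⟨a, ha⟩ := hf.exists_isSupportingAdditive S
  exact (ha.marginal_le hj).trans (ha.apply_le_singleton j)

/-- Greedy trimming: remove agents whose marginal is below `a i / 2` one at a time; each removal
loses less than half of that agent's `a`-weight. -/
theorem exists_subset_half_le_marginal (f : Finset α → ℝ) (a : α → ℝ) (U : Finset α) :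
    ∃ T ⊆ U, (∀ i ∈ T, a i / 2 ≤ marginal f T i) ∧
      2 * (f U - f T) ≤ ∑ i ∈ U, a i - ∑ i ∈ T, a i := by
  induction U using Finset.strongInduction with
  | H U ih =>
    by_cases hU : ∀ i ∈ U, a i / 2 ≤ marginal f U i
    · exact ⟨U, Subset.rfl, hU, by simp⟩
    push Not at hU
    obtain ⟨j, hj, hjU⟩ := hU
    obtain ⟨T, hT, hTmarg, hTval⟩ := ih _ (erase_ssubset hj)
    refine ⟨T, hT.trans (erase_subset j U), hTmarg, ?_⟩
    have := sum_erase_add U a hj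
    unfold marginal at hjU
    linarith

noncomputable def paymentTo (f : Finset α → ℝ) (c : α → ℝ) (S : Finset α) (i : α) : ℝ≥0∞ :=
  ENNReal.ofReal (c i) / ENNReal.ofReal (marginal f S i)

theorem payment_eq_sum_paymentTo : payment f c S = ∑ i ∈ S, paymentTo f c S i := rfl

theorem payment_singleton (hf0 : f ∅ = 0) (j : α) :
    payment f c {j} = ENNReal.ofReal (c j) / ENNReal.ofReal (f {j}) := by
  simp [payment, marginal, hf0]

theorem paymentTo_le_two_mul_paymentTo {i : α} (h : marginal f S i ≤ 2 * marginal f T i) :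
    paymentTo f c T i ≤ 2 * paymentTo f c S i := by
  have hle : ENNReal.ofReal (marginal f S i) ≤ 2 * ENNReal.ofReal (marginal f T i) := by
    rw [← ENNReal.ofReal_ofNat 2, ← ENNReal.ofReal_mul zero_le_two]
    exact ENNReal.ofReal_le_ofReal h
  unfold paymentTo
  calc ENNReal.ofReal (c i) / ENNReal.ofReal (marginal f T i)
      = 2 * ENNReal.ofReal (c i) / (2 * ENNReal.ofReal (marginal f T i)) :=
        (ENNReal.mul_div_mul_left _ _ two_ne_zero ENNReal.ofNat_ne_top).symm
    _ ≤ 2 * ENNReal.ofReal (c i) / ENNReal.ofReal (marginal f S i) :=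
        ENNReal.div_le_div_left hle _
    _ = 2 * (ENNReal.ofReal (c i) / ENNReal.ofReal (marginal f S i)) := mul_div_assoc ..

theorem IsXOS.half_lt_paymentTo (hf : IsXOS f) {j : α} (hj : j ∈ S) (hheavy : ¬isLight f c j) :
    ENNReal.ofReal (1 / 2) < paymentTo f c S j := by
  refine (not_le.mp hheavy).trans_le ?_
  rw [payment_singleton hf.map_empty]
  exact ENNReal.div_le_div_left (ENNReal.ofReal_le_ofReal (hf.marginal_le_singleton hj)) _

theorem IsXOS.isLight_of_mem_erase (hf : IsXOS f) (hS : payment f c S ≤ 1) {h i : α}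
    (hh : h ∈ S) (hheavy : ¬isLight f c h) (hi : i ∈ S.erase h) : isLight f c i := by
  by_contra hiheavy
  obtain ⟨hih, hiS⟩ := mem_erase.mp hi
  have hpair : paymentTo f c S h + paymentTo f c S i ≤ payment f c S := by
    rw [← sum_pair (Ne.symm hih)]
    exact sum_le_sum_of_subset (insert_subset hh (singleton_subset_iff.mpr hiS))
  have hone : 1 = ENNReal.ofReal (1 / 2) + ENNReal.ofReal (1 / 2) := by
    rw [← ENNReal.ofReal_add] <;> norm_num
  have := ENNReal.add_lt_add (hf.half_lt_paymentTo hh hheavy) (hf.half_lt_paymentTo hiS hiheavy)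
  exact (hone ▸ this).not_ge (hpair.trans hS)

theorem IsXOS.two_mul_sum_erase_paymentTo_le (hf : IsXOS f) (hB1 : B ≤ 1) (hS : feasible f c B S)
    {h : α} (hh : h ∈ S) (hheavy : ¬isLight f c h) :
    2 * ∑ i ∈ S.erase h, paymentTo f c S i ≤ ENNReal.ofReal B := by
  set rest := ∑ i ∈ S.erase h, paymentTo f c S i
  have hsplit : rest + paymentTo f c S h ≤ ENNReal.ofReal B :=
    (sum_erase_add S _ hh).trans_le hS
  have hB : ENNReal.ofReal B ≤ 2 * paymentTo f c S h := by
    calc ENNReal.ofReal B ≤ 2 * ENNReal.ofReal (1 / 2) := by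
          rw [← ENNReal.ofReal_ofNat 2, ← ENNReal.ofReal_mul zero_le_two]
          exact ENNReal.ofReal_le_ofReal (by linarith)
      _ ≤ 2 * paymentTo f c S h := by gcongr; exact (hf.half_lt_paymentTo hh hheavy).le
  refine (ENNReal.add_le_add_iff_right (ENNReal.ofReal_ne_top (r := B))).mp ?_
  calc 2 * rest + ENNReal.ofReal B ≤ 2 * (rest + paymentTo f c S h) := by
        rw [mul_add]; gcongr
    _ ≤ 2 * ENNReal.ofReal B := by gcongr
    _ = ENNReal.ofReal B + ENNReal.ofReal B := two_mul _

theorem IsXOS.exists_feasibleLight_of_not_isLight (hf : IsXOS f) (hB1 : B ≤ 1)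
    (hS : feasible f c B S) {h : α} (hh : h ∈ S) (hheavy : ¬isLight f c h) :
    ∃ T, feasibleLight f c B T ∧ f (S.erase h) ≤ 2 * f T := by
  obtain ⟨a, ha⟩ := hf.exists_isSupportingAdditive S
  obtain ⟨T, hTU, hTmarg, hTval⟩ := exists_subset_half_le_marginal f a (S.erase h)
  have hTS : T ⊆ S := hTU.trans (erase_subset h S)
  have hlight : ∀ i ∈ T, isLight f c i := fun i hi =>
    hf.isLight_of_mem_erase (hS.trans (ENNReal.ofReal_le_one.mpr hB1)) hh hheavy (hTU hi)
  have hpay : payment f c T ≤ ENNReal.ofReal B :=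
    calc payment f c T ≤ 2 * ∑ i ∈ T, paymentTo f c S i := by
          rw [payment_eq_sum_paymentTo, mul_sum]
          exact sum_le_sum fun i hi => paymentTo_le_two_mul_paymentTo
            (by linarith [ha.marginal_le (hTS hi), hTmarg i hi])
      _ ≤ 2 * ∑ i ∈ S.erase h, paymentTo f c S i := by gcongr
      _ ≤ ENNReal.ofReal B := hf.two_mul_sum_erase_paymentTo_le hB1 hS hh hheavy
  refine ⟨T, ⟨hlight, hpay⟩, ?_⟩
  have : 0 ≤ ∑ i ∈ T, a i := sum_nonneg fun i _ => ha.1 i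
  linarith [ha.2.2 (S.erase h)]

end

theorem le_maxVal {α : Type*} [Finite α] (φ : Finset α → ℝ) {P : Finset α → Prop}
    {S : Finset α} (hS : P S) : φ S ≤ maxVal φ P :=
  le_csSup (Set.toFinite _).bddAbove ⟨S, hS, rfl⟩

theorem maxVal_le {α : Type*} {φ : Finset α → ℝ} {P : Finset α → Prop} {b : ℝ}
    (hP : ∃ S, P S) (h : ∀ S, P S → φ S ≤ b) : maxVal φ P ≤ b :=
  csSup_le (hP.elim fun S hS => ⟨φ S, S, hS, rfl⟩) (Set.forall_mem_image.mpr h)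

theorem best_key_property_xos_general {α : Type*} [DecidableEq α] [Fintype α]
    (f : Finset α → ℝ) (c : α → ℝ) (φ : Finset α → ℝ)
    (hxos : IsXOS f)
    (hφ : IsBEST f c φ)
    (B : ℝ) (hB1 : B ≤ 1) :
    maxVal φ (feasible f c B) ≤
      2 * maxVal f (feasibleLight f c B) + ⨆ i : α, φ {i} := by
  obtain ⟨hφ0, hφf, -, hφerase⟩ := hφ
  refine maxVal_le ⟨∅, by simp [feasible, payment]⟩ fun S hS => ?_
  by_cases hlight : ∀ i ∈ S, isLight f c i
  · have := le_maxVal f (P := feasibleLight f c B) ⟨hlight, hS⟩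
    linarith [hφf S, hφ0 S, Real.iSup_nonneg fun i => hφ0 {i}]
  · push Not at hlight
    obtain ⟨h, hh, hheavy⟩ := hlight
    obtain ⟨T, hT, hST⟩ := hxos.exists_feasibleLight_of_not_isLight hB1 hS hh hheavy
    linarith [hφerase S h hh, le_ciSup (Set.finite_range fun i => φ {i}).bddAbove h,
      le_maxVal f hT]

/-- **Key Property of BEST Objectives (XOS case).** -/
theorem best_key_property_xos {α : Type*} [DecidableEq α] [Fintype α] [Nonempty α]
    (f : Finset α → ℝ) (c : α → ℝ) (φ : Finset α → ℝ)
    (hf01 : ∀ S, f S ∈ Set.Icc (0 : ℝ) 1) (hf0 : f ∅ = 0)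
    (hxos : IsXOS f) (hc : ∀ i, 0 ≤ c i)
    (hφ : IsBEST f c φ)
    (B : ℝ) (hB0 : 0 < B) (hB1 : B ≤ 1) :
    maxVal φ (feasible f c B) ≤
      2 * maxVal f (feasibleLight f c B) + ⨆ i : α, φ {i} :=
  best_key_property_xos_general f c φ hxos hφ B hB1
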